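/- Let (V,d) be a finite metric space with facility opening costs fac : V → ℝ_{≥0}, and let F ⊆ V be nonempty. Suppose F is locally optimal for UFL under opening, closing, and swapping moves: for every f' ∈ V, UFL(F ∪ {f'}) ≥ UFL(F); for every r ∈ F with F \ {r} nonempty, UFL(F \ {r}) ≥ UFL(F); and for every r ∈ F and f' ∈ V, UFL((F \ {r}) ∪ {f'}) ≥ UFL(F). Then for every nonempty F* ⊆ V, the facility cost satisfies fac(F) ≤ fac(F*) + 2·Σ_{j ∈ V} d(j,F*). -/
import Mathlib


open Finset

/-- Distance from a client `j` to a nonempty facility set `F`: `min_{f ∈ F} d(j,f)`. -/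
noncomputable def distSet {V : Type*} [MetricSpace V] (j : V) (F : Finset V)
    (hF : F.Nonempty) : ℝ :=
  F.inf' hF fun f => dist j f

/-- The uncapacitated facility location cost of a nonempty facility set `F`:
`UFL(F) = ∑_{f ∈ F} fac(f) + ∑_{j ∈ V} d(j,F)`. -/
noncomputable def UFL {V : Type*} [MetricSpace V] [Fintype V] (fac : V → ℝ)
    (F : Finset V) (hF : F.Nonempty) : ℝ :=
  (∑ f ∈ F, fac f) + ∑ j : V, distSet j F hF

lemma distSet_le {V : Type*} [MetricSpace V] (j : V) (F : Finset V) (hF : F.Nonempty)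
    {a : V} (ha : a ∈ F) : distSet j F hF ≤ dist j a :=
  Finset.inf'_le _ ha

lemma distSet_nonneg {V : Type*} [MetricSpace V] (j : V) (F : Finset V) (hF : F.Nonempty) :
    0 ≤ distSet j F hF :=
  Finset.le_inf' hF _ fun _ _ => dist_nonneg

/-- Facility cost bound: at a local optimum for UFL under opening, closing,
and swapping moves, `fac(F) ≤ fac(F*) + 2·∑_j d(j,F*)`. -/
theorem ufl_facility_cost {V : Type*} [MetricSpace V] [Fintype V] [DecidableEq V]
    (fac : V → ℝ) (hfac : ∀ f : V, 0 ≤ fac f)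
    (F : Finset V) (hF : F.Nonempty)
    (hopen : ∀ f' : V, UFL fac (insert f' F) (insert_nonempty _ _) ≥ UFL fac F hF)
    (hclose : ∀ r ∈ F, ∀ hne : (F.erase r).Nonempty,
      UFL fac (F.erase r) hne ≥ UFL fac F hF)
    (hswap : ∀ r ∈ F, ∀ f' : V,
      UFL fac (insert f' (F.erase r)) (insert_nonempty _ _) ≥ UFL fac F hF) :
    ∀ (Fstar : Finset V) (hFstar : Fstar.Nonempty),
      (∑ f ∈ F, fac f) ≤ (∑ f ∈ Fstar, fac f) + 2 * ∑ j : V, distSet j Fstar hFstar := by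
  classical
  intro Fstar hFstar
  -- nearest facility in F to each client
  choose φ hφmem hφeq using fun j : V => F.exists_mem_eq_inf' hF (fun f => dist j f)
  -- nearest facility in Fstar to each client
  choose σ hσmem hσeq using fun j : V => Fstar.exists_mem_eq_inf' hFstar (fun f => dist j f)
  -- nearest facility in F to any point
  choose η hηmem hηeq using fun g : V => F.exists_mem_eq_inf' hF (fun f => dist g f)
  set c : V → ℝ := fun j => distSet j F hF with hc
  set cs : V → ℝ := fun j => distSet j Fstar hFstar with hcs
  have hceq : ∀ j, c j = dist j (φ j) := fun j => hφeq j
  have hcseq : ∀ j, cs j = dist j (σ j) := fun j => hσeq j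
  have hcpos : ∀ j, 0 ≤ c j := fun j => distSet_nonneg j F hF
  have hcspos : ∀ j, 0 ≤ cs j := fun j => distSet_nonneg j Fstar hFstar
  have hηmin : ∀ g : V, ∀ a ∈ F, dist g (η g) ≤ dist g a := by
    intro g a ha
    rw [← hηeq g]
    exact Finset.inf'_le _ ha
  -- key triangle bound: dist j (η (σ j)) ≤ 2 cs j + c j
  have hkey : ∀ j : V, dist j (η (σ j)) ≤ 2 * cs j + c j := by
    intro j
    have h1 : dist j (η (σ j)) ≤ dist j (σ j) + dist (σ j) (η (σ j)) := dist_triangle _ _ _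
    have h2 : dist (σ j) (η (σ j)) ≤ dist (σ j) (φ j) := hηmin (σ j) (φ j) (hφmem j)
    have h3 : dist (σ j) (φ j) ≤ dist (σ j) j + dist j (φ j) := dist_triangle _ _ _
    have h4 : dist (σ j) j = dist j (σ j) := dist_comm _ _
    rw [hceq j, hcseq j]
    linarith
  -- a local-optimality move gives a bound on the facility-cost difference
  have hdiff : ∀ (F' : Finset V) (hF' : F'.Nonempty), UFL fac F' hF' ≥ UFL fac F hF →
      (∑ g ∈ F, fac g) - (∑ g ∈ F', fac g) ≤ ∑ j : V, (distSet j F' hF' - c j) := by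
    intro F' hF' h
    unfold UFL at h
    rw [Finset.sum_sub_distrib]
    have : (∑ j : V, distSet j F hF) = ∑ j : V, c j := rfl
    linarith [h, this]
  -- sum over insert bound
  have hins : ∀ (a : V) (s : Finset V), (∑ g ∈ insert a s, fac g) ≤ fac a + ∑ g ∈ s, fac g := by
    intro a s
    by_cases ha : a ∈ s
    · rw [Finset.insert_eq_self.2 ha]
      linarith [hfac a]
    · rw [Finset.sum_insert ha]
  -- the per-facility key inequality
  have main : ∀ f ∈ F, fac f ≤ (∑ g ∈ Fstar.filter fun g => η g = f, fac g)
      + ∑ j ∈ Finset.univ.filter fun j => φ j = f, 2 * cs j := by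
    intro f hf
    by_cases hP : (Fstar.filter fun g => η g = f).Nonempty
    · -- f captures some facilities of Fstar; swap move + open moves
      set P := Fstar.filter fun g => η g = f with hPdef
      obtain ⟨fs, hfsP, hfseq⟩ := P.exists_mem_eq_inf' hP (fun g => dist f g)
      have hfsFs : fs ∈ Fstar := (Finset.mem_filter.1 hfsP).1
      have hηfs : η fs = f := (Finset.mem_filter.1 hfsP).2
      have hfsmin : ∀ g ∈ P, dist f fs ≤ dist f g := by
        intro g hg
        rw [← hfseq]
        exact Finset.inf'_le _ hg
      -- the swap move
      have hsw := hdiff _ _ (hswap f hf fs)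
      have h2 : (∑ g ∈ insert fs (F.erase f), fac g) ≤ fac fs + ∑ g ∈ F.erase f, fac g :=
        hins fs (F.erase f)
      have h3 : (∑ g ∈ F.erase f, fac g) + fac f = ∑ g ∈ F, fac g :=
        Finset.sum_erase_add F fac hf
      -- pointwise bound for the swap reassignment
      have hpt : ∀ j : V,
          distSet j (insert fs (F.erase f)) (insert_nonempty _ _) - c j ≤
            (if φ j = f ∧ σ j ∈ P.erase fs then c j - cs j else 0)
            + (if φ j = f then 2 * cs j else 0) := by
        intro j
        by_cases hj : φ j = f
        · by_cases hjs : σ j ∈ P.erase fs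
          · -- reassign to fs via f
            have hσne : σ j ∈ P := Finset.mem_of_mem_erase hjs
            have hle : distSet j (insert fs (F.erase f)) (insert_nonempty _ _) ≤ dist j fs :=
              distSet_le _ _ _ (Finset.mem_insert_self _ _)
            have ht1 : dist j fs ≤ dist j f + dist f fs := dist_triangle _ _ _
            have ht2 : dist f fs ≤ dist f (σ j) := hfsmin _ hσne
            have ht3 : dist f (σ j) ≤ dist f j + dist j (σ j) := dist_triangle _ _ _
            have hjf : dist j f = c j := by rw [hceq j, hj]
            have hfj : dist f j = c j := by rw [dist_comm, hjf]
            rw [if_pos (And.intro hj hjs), if_pos hj, hcseq j]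
            linarith
          · rw [if_neg (fun h => hjs h.2), if_pos hj, zero_add]
            by_cases hfs' : σ j = fs
            · -- reassign to fs = σ j
              have hle : distSet j (insert fs (F.erase f)) (insert_nonempty _ _) ≤ dist j fs :=
                distSet_le _ _ _ (Finset.mem_insert_self _ _)
              have hdfs : dist j fs = cs j := by rw [hcseq j, hfs']
              linarith [hcpos j, hcspos j]
            · -- σ j not captured by f : reassign to η (σ j) ∈ F.erase f
              have hησ : η (σ j) ≠ f := by
                intro hcontra
                apply hjs
                exact Finset.mem_erase.2 ⟨hfs', Finset.mem_filter.2 ⟨hσmem j, hcontra⟩⟩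
              have hmem : η (σ j) ∈ insert fs (F.erase f) :=
                Finset.mem_insert_of_mem (Finset.mem_erase.2 ⟨hησ, hηmem (σ j)⟩)
              have hle : distSet j (insert fs (F.erase f)) (insert_nonempty _ _) ≤
                  dist j (η (σ j)) := distSet_le _ _ _ hmem
              linarith [hkey j]
        · -- φ j ≠ f : keep φ j
          have hmem : φ j ∈ insert fs (F.erase f) :=
            Finset.mem_insert_of_mem (Finset.mem_erase.2 ⟨hj, hφmem j⟩)
          have hle : distSet j (insert fs (F.erase f)) (insert_nonempty _ _) ≤ dist j (φ j) :=
            distSet_le _ _ _ hmem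
          rw [if_neg (fun h => hj h.1), if_neg hj, hceq j] at *
          linarith
      -- open moves for the other captured facilities
      have hadd : ∀ g ∈ P.erase fs,
          (∑ j : V, if φ j = f ∧ σ j = g then c j - cs j else 0) ≤ fac g := by
        intro g hg
        have h := hdiff _ _ (hopen g)
        have h2' : (∑ x ∈ insert g F, fac x) ≤ fac g + ∑ x ∈ F, fac x := hins g F
        have hptw : ∀ j : V, (if φ j = f ∧ σ j = g then c j - cs j else 0) ≤
            c j - distSet j (insert g F) (insert_nonempty _ _) := by
          intro j
          by_cases hcond : φ j = f ∧ σ j = g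
          · have hle : distSet j (insert g F) (insert_nonempty _ _) ≤ dist j g :=
              distSet_le _ _ _ (Finset.mem_insert_self _ _)
            rw [if_pos hcond, ← hcond.2, ← hcseq j] at *
            linarith
          · have hle : distSet j (insert g F) (insert_nonempty _ _) ≤ dist j (φ j) :=
              distSet_le _ _ _ (Finset.mem_insert_of_mem (hφmem j))
            rw [if_neg hcond, hceq j]
            linarith
        have hsum := Finset.sum_le_sum (fun j (_ : j ∈ Finset.univ) => hptw j)
        have heq : (∑ j : V, (c j - distSet j (insert g F) (insert_nonempty _ _))) =
            -(∑ j : V, (distSet j (insert g F) (insert_nonempty _ _) - c j)) := by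
          rw [← Finset.sum_neg_distrib]
          congr 1
          ext j
          ring
        rw [heq] at hsum
        linarith
      -- combine
      have hswsum := Finset.sum_le_sum (fun j (_ : j ∈ Finset.univ) => hpt j)
      rw [Finset.sum_add_distrib] at hswsum
      -- rewrite first sum as sum over P.erase fs of a sum over clients
      have hsplit : (∑ j : V, if φ j = f ∧ σ j ∈ P.erase fs then c j - cs j else 0)
          = ∑ g ∈ P.erase fs, ∑ j : V, if φ j = f ∧ σ j = g then c j - cs j else 0 := by
        rw [Finset.sum_comm]
        congr 1
        ext j
        by_cases hj : φ j = f
        · simp only [hj, true_and]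
          exact (Finset.sum_ite_eq (P.erase fs) (σ j) (fun _ => c j - cs j)).symm
        · simp [hj]
      have haddsum : (∑ j : V, if φ j = f ∧ σ j ∈ P.erase fs then c j - cs j else 0)
          ≤ ∑ g ∈ P.erase fs, fac g := by
        rw [hsplit]
        exact Finset.sum_le_sum hadd
      have hfilter : (∑ j : V, if φ j = f then 2 * cs j else 0)
          = ∑ j ∈ Finset.univ.filter fun j => φ j = f, 2 * cs j :=
        (Finset.sum_filter _ _).symm
      have herase : (∑ g ∈ P.erase fs, fac g) + fac fs = ∑ g ∈ P, fac g :=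
        Finset.sum_erase_add P fac hfsP
      rw [hfilter] at hswsum
      linarith
    · -- f captures nothing : close move
      have hnotf : ∀ g ∈ Fstar, η g ≠ f := by
        intro g hg hgf
        exact hP ⟨g, Finset.mem_filter.2 ⟨hg, hgf⟩⟩
      obtain ⟨g0, hg0⟩ := hFstar
      have hne : (F.erase f).Nonempty :=
        ⟨η g0, Finset.mem_erase.2 ⟨hnotf g0 hg0, hηmem g0⟩⟩
      have h1 := hdiff _ hne (hclose f hf hne)
      have h3 : (∑ g ∈ F.erase f, fac g) + fac f = ∑ g ∈ F, fac g :=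
        Finset.sum_erase_add F fac hf
      have hpt : ∀ j : V, distSet j (F.erase f) hne - c j ≤
          if φ j = f then 2 * cs j else 0 := by
        intro j
        by_cases hj : φ j = f
        · have hmem : η (σ j) ∈ F.erase f :=
            Finset.mem_erase.2 ⟨hnotf (σ j) (hσmem j), hηmem (σ j)⟩
          have hle : distSet j (F.erase f) hne ≤ dist j (η (σ j)) := distSet_le _ _ _ hmem
          rw [if_pos hj]
          linarith [hkey j]
        · have hmem : φ j ∈ F.erase f := Finset.mem_erase.2 ⟨hj, hφmem j⟩
          have hle : distSet j (F.erase f) hne ≤ dist j (φ j) := distSet_le _ _ _ hmem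
          rw [if_neg hj, hceq j] at *
          linarith
      have hsum := Finset.sum_le_sum (fun j (_ : j ∈ Finset.univ) => hpt j)
      have hfilter : (∑ j : V, if φ j = f then 2 * cs j else 0)
          = ∑ j ∈ Finset.univ.filter fun j => φ j = f, 2 * cs j :=
        (Finset.sum_filter _ _).symm
      have hPzero : (∑ g ∈ Fstar.filter fun g => η g = f, fac g) = 0 := by
        rw [Finset.not_nonempty_iff_eq_empty.1 hP, Finset.sum_empty]
      rw [hfilter] at hsum
      linarith
  -- sum the per-facility inequality over F
  calc (∑ f ∈ F, fac f)
      ≤ ∑ f ∈ F, ((∑ g ∈ Fstar.filter fun g => η g = f, fac g)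
          + ∑ j ∈ Finset.univ.filter fun j => φ j = f, 2 * cs j) :=
        Finset.sum_le_sum main
    _ = (∑ f ∈ F, ∑ g ∈ Fstar.filter fun g => η g = f, fac g)
          + ∑ f ∈ F, ∑ j ∈ Finset.univ.filter fun j => φ j = f, 2 * cs j :=
        Finset.sum_add_distrib
    _ = (∑ g ∈ Fstar, fac g) + ∑ j : V, 2 * cs j := by
        rw [Finset.sum_fiberwise_of_maps_to (fun g hg => hηmem g) fac,
          Finset.sum_fiberwise_of_maps_to (fun j _ => hφmem j) (fun j => 2 * cs j)]
    _ = (∑ g ∈ Fstar, fac g) + 2 * ∑ j : V, distSet j Fstar hFstar := by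
        rw [Finset.mul_sum]
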